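/- arXiv:1704.04083 — 2 statements merged into one kernel-verified Lean document; each statement's English description precedes it below -/
import Mathlib

section
/- Let C_1, C_2, …, C_l be linear codes of length n over F_q, let A be an l × l orthogonal matrix over F_q, let λ_1, …, λ_l ∈ F_q \ {0}, and let α_i, β_i ∈ F_q \ {0} (1 ≤ i ≤ ⌊l/2⌋) satisfy α_i² + β_i² ≠ 0, with D_i the 2×2 matrix with rows (α_i, β_i) and (−β_i, α_i). Set Ā = diag(λ_1,…,λ_l) · blockdiag(D_1,…,D_{l/2}) · A if l is even, and Ā = diag(λ_1,…,λ_l) · blockdiag(D_1,…,D_{⌊l/2⌋},1) · A if l is odd. Then the matrix-product code C = [C_1, C_2, …, C_l]Ā is LCD if and only if C_1, C_2, …, C_l are all LCD codes. -/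
/-- The Euclidean dual of a code `C ⊆ R^n`:
`C^⊥ = {x : x · c = 0 for all c ∈ C}` where `x · y = ∑ i, x i * y i`. -/
def dualCode {R : Type*} [CommRing R] {n : ℕ} (C : Submodule R (Fin n → R)) :
    Submodule R (Fin n → R) where
  carrier := {x | ∀ c ∈ C, ∑ i, x i * c i = 0}
  zero_mem' := by intro c hc; simp
  add_mem' := by
    intro a b ha hb c hc
    have h1 := ha c hc
    have h2 := hb c hc
    simp only [Pi.add_apply, add_mul, Finset.sum_add_distrib, h1, h2, add_zero]
  smul_mem' := by
    intro r x hx c hc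
    have h1 := hx c hc
    simp only [Pi.smul_apply, smul_eq_mul, mul_assoc, ← Finset.mul_sum, h1, mul_zero]

/-- A code is LCD (linear complementary dual) if `C ∩ C^⊥ = {0}`. -/
def IsLCD {R : Type*} [CommRing R] {n : ℕ} (C : Submodule R (Fin n → R)) : Prop :=
  C ⊓ dualCode C = ⊥

/-- The matrix-product code `[C_1, …, C_l]A`: all `n × m` matrices
`[c_1, …, c_l] · A` where the `i`-th column `c i` of the left factor belongs to `C i`. -/
def matrixProductCode {F : Type*} [Field F] {n l m : ℕ}
    (C : Fin l → Submodule F (Fin n → F)) (A : Matrix (Fin l) (Fin m) F) :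
    Submodule F (Matrix (Fin n) (Fin m) F) where
  carrier := {X | ∃ c : Fin l → Fin n → F, (∀ i, c i ∈ C i) ∧
      X = (Matrix.of fun r i => c i r) * A}
  zero_mem' := ⟨0, fun i => (C i).zero_mem, by
    ext r j; simp [Matrix.mul_apply]⟩
  add_mem' := by
    rintro X Y ⟨c, hc, rfl⟩ ⟨c', hc', rfl⟩
    refine ⟨c + c', fun i => (C i).add_mem (hc i) (hc' i), ?_⟩
    rw [← Matrix.add_mul]
    rfl
  smul_mem' := by
    rintro r X ⟨c, hc, rfl⟩
    refine ⟨r • c, fun i => (C i).smul_mem r (hc i), ?_⟩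
    rw [← Matrix.smul_mul]
    rfl

/-- Euclidean dual of a code whose codewords are `n × m` matrices, with respect to
the inner product summing the entrywise products over all entries. -/
def dualMatCode {F : Type*} [Field F] {n m : ℕ}
    (C : Submodule F (Matrix (Fin n) (Fin m) F)) :
    Submodule F (Matrix (Fin n) (Fin m) F) where
  carrier := {X | ∀ Y ∈ C, ∑ r, ∑ j, X r j * Y r j = 0}
  zero_mem' := by intro Y hY; simp
  add_mem' := by
    intro X X' hX hX' Y hY
    have h1 := hX Y hY
    have h2 := hX' Y hY
    simp only [Matrix.add_apply, add_mul, Finset.sum_add_distrib, h1, h2, add_zero]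
  smul_mem' := by
    intro r X hX Y hY
    have h1 := hX Y hY
    simp only [Matrix.smul_apply, smul_eq_mul, mul_assoc, ← Finset.mul_sum, h1, mul_zero]

/-- LCD property for codes of matrix codewords. -/
def IsLCDMat {F : Type*} [Field F] {n m : ℕ}
    (C : Submodule F (Matrix (Fin n) (Fin m) F)) : Prop :=
  C ⊓ dualMatCode C = ⊥

/-- The block-diagonal matrix with the `2 × 2` blocks `D_i = [[α_i, β_i], [-β_i, α_i]]`
for `1 ≤ i ≤ ⌊l/2⌋` along the diagonal and, when `l` is odd, a final `1 × 1` block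
equal to `1`. -/
def blockDiagD {F : Type*} [CommRing F] (l : ℕ) (α β : Fin (l / 2) → F) :
    Matrix (Fin l) (Fin l) F :=
  Matrix.of fun i j =>
    if hi : (i : ℕ) / 2 < l / 2 then
      if (i : ℕ) / 2 = (j : ℕ) / 2 then
        if (i : ℕ) % 2 = 0 then
          if (j : ℕ) % 2 = 0 then α ⟨(i : ℕ) / 2, hi⟩ else β ⟨(i : ℕ) / 2, hi⟩
        else
          if (j : ℕ) % 2 = 0 then -β ⟨(i : ℕ) / 2, hi⟩ else α ⟨(i : ℕ) / 2, hi⟩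
      else 0
    else if i = j then 1 else 0

-- auxiliary lemmas

lemma mem_mpc {F : Type*} [Field F] {n l m : ℕ}
    (C : Fin l → Submodule F (Fin n → F)) (A : Matrix (Fin l) (Fin m) F)
    (X : Matrix (Fin n) (Fin m) F) :
    X ∈ matrixProductCode C A ↔ ∃ c : Fin l → Fin n → F, (∀ i, c i ∈ C i) ∧
      X = (Matrix.of fun r i => c i r) * A := Iff.rfl

lemma mem_dualMat {F : Type*} [Field F] {n m : ℕ}
    (C : Submodule F (Matrix (Fin n) (Fin m) F)) (X : Matrix (Fin n) (Fin m) F) :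
    X ∈ dualMatCode C ↔ ∀ Y ∈ C, ∑ r, ∑ j, X r j * Y r j = 0 := Iff.rfl

lemma mem_dual {R : Type*} [CommRing R] {n : ℕ} (C : Submodule R (Fin n → R))
    (x : Fin n → R) : x ∈ dualCode C ↔ ∀ c ∈ C, ∑ i, x i * c i = 0 := Iff.rfl

lemma inner_key {F : Type*} [Field F] {n l : ℕ} (M : Matrix (Fin l) (Fin l) F) (d : Fin l → F)
    (hM : M * M.transpose = Matrix.diagonal d) (c c' : Fin l → Fin n → F) :
    ∑ r, ∑ j, ((Matrix.of fun r i => c i r) * M) r j * ((Matrix.of fun r i => c' i r) * M) r j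
      = ∑ a, d a * ∑ r, c a r * c' a r := by
  have key : ∀ r : Fin n, ∑ j, ((Matrix.of fun r i => c i r) * M) r j * ((Matrix.of fun r i => c' i r) * M) r j
      = (((Matrix.of fun r i => c i r) * M) * ((Matrix.of fun r i => c' i r) * M).transpose) r r := by
    intro r
    simp [Matrix.mul_apply, mul_comm]
  rw [Finset.sum_congr rfl fun r _ => key r]
  have h2 : ((Matrix.of fun r i => c i r) * M) * ((Matrix.of fun r i => c' i r) * M).transpose
      = (Matrix.of fun r i => c i r) * Matrix.diagonal d * (Matrix.of fun r i => c' i r).transpose := by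
    rw [Matrix.transpose_mul, ← hM, ← Matrix.mul_assoc, ← Matrix.mul_assoc]
  rw [h2]
  have h3 : ∀ r : Fin n, ((Matrix.of fun r i => c i r) * Matrix.diagonal d * (Matrix.of fun r i => c' i r).transpose) r r
      = ∑ a, d a * (c a r * c' a r) := by
    intro r
    rw [Matrix.mul_apply]
    simp only [Matrix.mul_diagonal, Matrix.transpose_apply, Matrix.of_apply]
    exact Finset.sum_congr rfl fun a _ => by ring
  rw [Finset.sum_congr rfl fun r _ => h3 r, Finset.sum_comm]
  simp [Finset.mul_sum]

lemma lcd_of_diag {F : Type*} [Field F] {n l : ℕ}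
    (C : Fin l → Submodule F (Fin n → F)) (M : Matrix (Fin l) (Fin l) F) (d : Fin l → F)
    (hM : M * M.transpose = Matrix.diagonal d) (hd : ∀ a, d a ≠ 0) :
    IsLCDMat (matrixProductCode C M) ↔ ∀ i, IsLCD (C i) := by
  -- M is invertible
  have hdet : IsUnit M.det := by
    have h1 : M.det * M.det = ∏ a, d a := by
      have := congrArg Matrix.det hM
      rwa [Matrix.det_mul, Matrix.det_transpose, Matrix.det_diagonal] at this
    have h2 : M.det ≠ 0 := by
      intro h
      exact Finset.prod_ne_zero_iff.mpr (fun a _ => hd a) (by rw [← h1, h, mul_zero])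
    exact Ne.isUnit h2
  have hMN : M * M⁻¹ = 1 := Matrix.mul_nonsing_inv M hdet
  -- cancellation: if c*M = 0 then c = 0
  have hcancel : ∀ X : Matrix (Fin n) (Fin l) F, X * M = 0 → X = 0 := by
    intro X h
    have : X * M * M⁻¹ = 0 := by rw [h, Matrix.zero_mul]
    rwa [Matrix.mul_assoc, hMN, Matrix.mul_one] at this
  constructor
  · intro hLCD i
    rw [IsLCD, Submodule.eq_bot_iff]
    rintro v ⟨hv1, hv2⟩
    classical
    set c : Fin l → Fin n → F := fun j => if j = i then v else 0 with hc
    set X : Matrix (Fin n) (Fin l) F := (Matrix.of fun r j => c j r) * M with hX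
    have hXC : X ∈ matrixProductCode C M := by
      refine ⟨c, fun j => ?_, rfl⟩
      by_cases h : j = i
      · subst h; simpa [hc] using hv1
      · simp [hc, h]
    have hXD : X ∈ dualMatCode (matrixProductCode C M) := by
      rintro Y ⟨c', hc', rfl⟩
      rw [hX, inner_key M d hM]
      refine Finset.sum_eq_zero fun a _ => ?_
      by_cases h : a = i
      · subst h
        have : ∑ r, c a r * c' a r = 0 := by
          simpa [hc] using hv2 (c' a) (hc' a)
        rw [this, mul_zero]
      · simp [hc, h]
    have hX0 : X = 0 := by
      rw [IsLCDMat, Submodule.eq_bot_iff] at hLCD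
      exact hLCD X ⟨hXC, hXD⟩
    have h0 : (Matrix.of fun r j => c j r) = (0 : Matrix (Fin n) (Fin l) F) :=
      hcancel _ (by rw [← hX, hX0])
    funext r
    have := congrFun (congrFun h0 r) i
    simpa [hc] using this
  · intro hall
    rw [IsLCDMat, Submodule.eq_bot_iff]
    rintro X ⟨⟨c, hcC, rfl⟩, hXD⟩
    have hzero : ∀ j, c j = 0 := by
      intro j
      have hdual : c j ∈ dualCode (C j) := by
        intro w hw
        classical
        set c' : Fin l → Fin n → F := fun a => if a = j then w else 0 with hc'
        have hYC : ((Matrix.of fun r a => c' a r) * M) ∈ matrixProductCode C M := by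
          refine ⟨c', fun a => ?_, rfl⟩
          by_cases h : a = j
          · subst h; simpa [hc'] using hw
          · simp [hc', h]
        have := hXD _ hYC
        rw [inner_key M d hM] at this
        have hsum : ∑ a, d a * ∑ r, c a r * c' a r = d j * ∑ r, c j r * w r := by
          rw [Finset.sum_eq_single j]
          · simp [hc']
          · intro a _ h; simp [hc', h]
          · intro h; exact absurd (Finset.mem_univ j) h
        rw [hsum] at this
        exact (mul_eq_zero.mp this).resolve_left (hd j)
      have := hall j
      rw [IsLCD, Submodule.eq_bot_iff] at this
      exact this (c j) ⟨hcC j, hdual⟩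
    have : (Matrix.of fun r j => c j r) = (0 : Matrix (Fin n) (Fin l) F) := by
      funext r j
      simp [hzero j]
    rw [this, Matrix.zero_mul]

lemma blockDiagD_mul_transpose {F : Type*} [CommRing F] (l : ℕ) (α β : Fin (l / 2) → F) :
    blockDiagD l α β * (blockDiagD l α β).transpose
      = Matrix.diagonal (fun i : Fin l =>
          if h : (i : ℕ) / 2 < l / 2 then α ⟨(i : ℕ) / 2, h⟩ ^ 2 + β ⟨(i : ℕ) / 2, h⟩ ^ 2 else 1) := by
  ext i j
  rw [Matrix.mul_apply]
  simp only [Matrix.transpose_apply]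
  by_cases hi : (i : ℕ) / 2 < l / 2
  · by_cases hj : (j : ℕ) / 2 < l / 2
    · by_cases hij : (i : ℕ) / 2 = (j : ℕ) / 2
      · -- same block
        have hk0 : 2 * ((i : ℕ) / 2) < l := by omega
        have hk1 : 2 * ((i : ℕ) / 2) + 1 < l := by omega
        have hd2 : ∀ k : Fin l, (k : ℕ) / 2 ≠ (i : ℕ) / 2 →
            blockDiagD l α β i k * blockDiagD l α β j k = 0 := by
          intro k hk
          simp only [blockDiagD, Matrix.of_apply, dif_pos hi]
          rw [if_neg (show ¬((i : ℕ) / 2 = (k : ℕ) / 2) from fun h => hk h.symm), zero_mul]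
        have hsum : ∑ k, blockDiagD l α β i k * blockDiagD l α β j k
            = blockDiagD l α β i ⟨2 * ((i : ℕ) / 2), hk0⟩ * blockDiagD l α β j ⟨2 * ((i : ℕ) / 2), hk0⟩
              + blockDiagD l α β i ⟨2 * ((i : ℕ) / 2) + 1, hk1⟩ * blockDiagD l α β j ⟨2 * ((i : ℕ) / 2) + 1, hk1⟩ := by
          rw [← Finset.add_sum_erase _ _ (Finset.mem_univ (⟨2 * ((i : ℕ) / 2), hk0⟩ : Fin l))]
          congr 1
          rw [Finset.sum_eq_single_of_mem (⟨2 * ((i : ℕ) / 2) + 1, hk1⟩ : Fin l)]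
          · exact Finset.mem_erase.mpr ⟨by simp [Fin.ext_iff], Finset.mem_univ _⟩
          · intro k hk hne
            have h0 : (k : ℕ) ≠ 2 * ((i : ℕ) / 2) := by
              intro h
              exact (Finset.mem_erase.mp hk).1 (Fin.ext h)
            have h1 : (k : ℕ) ≠ 2 * ((i : ℕ) / 2) + 1 := by
              intro h
              exact hne (Fin.ext h)
            exact hd2 k (by omega)
        rw [hsum]
        simp only [blockDiagD, Matrix.of_apply, dif_pos hi, dif_pos hj]
        have c0 : (2 * ((i : ℕ) / 2)) / 2 = (i : ℕ) / 2 := by omega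
        have c1 : (2 * ((i : ℕ) / 2) + 1) / 2 = (i : ℕ) / 2 := by omega
        have m0 : (2 * ((i : ℕ) / 2)) % 2 = 0 := by omega
        have m1 : (2 * ((i : ℕ) / 2) + 1) % 2 = 1 := by omega
        have hfin : (⟨(j : ℕ) / 2, hj⟩ : Fin (l / 2)) = ⟨(i : ℕ) / 2, hi⟩ := by
          simp [Fin.ext_iff, hij.symm]
        by_cases pi : (i : ℕ) % 2 = 0 <;> by_cases pj : (j : ℕ) % 2 = 0
        · have hieq : i = j := Fin.ext (by omega)
          subst hieq
          rw [Matrix.diagonal_apply_eq, dif_pos hi]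
          simp only [c0, c1, m0, m1, hfin, hij.symm, pi]
          norm_num
          ring
        · have hne : i ≠ j := by
            intro h; rw [h] at pi; exact pj pi
          rw [Matrix.diagonal_apply_ne _ hne]
          simp only [c0, c1, m0, m1, hfin, hij.symm, pi, pj]
          norm_num
          ring
        · have hne : i ≠ j := by
            intro h; rw [h] at pi; exact pi pj
          rw [Matrix.diagonal_apply_ne _ hne]
          simp only [c0, c1, m0, m1, hfin, hij.symm, pi, pj]
          norm_num
          ring
        · have hieq : i = j := Fin.ext (by omega)
          subst hieq
          rw [Matrix.diagonal_apply_eq, dif_pos hi]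
          simp only [c0, c1, m0, m1, hfin, hij.symm, pi]
          norm_num
          ring
      · -- different blocks
        rw [Matrix.diagonal_apply_ne _ (fun h => hij (by rw [h]))]
        refine Finset.sum_eq_zero fun k _ => ?_
        simp only [blockDiagD, Matrix.of_apply, dif_pos hi, dif_pos hj]
        by_cases h1 : (i : ℕ) / 2 = (k : ℕ) / 2
        · rw [if_neg (show ¬((j : ℕ) / 2 = (k : ℕ) / 2) from fun h2 => hij (h1.trans h2.symm)), mul_zero]
        · rw [if_neg h1, zero_mul]
    · -- j in the final block, i not
      have hij : i ≠ j := fun h => hj (h ▸ hi)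
      rw [Matrix.diagonal_apply_ne _ hij]
      refine Finset.sum_eq_zero fun k _ => ?_
      simp only [blockDiagD, Matrix.of_apply, dif_neg hj, dif_pos hi]
      by_cases hk : j = k
      · subst hk
        rw [if_neg (show ¬((i : ℕ) / 2 = (j : ℕ) / 2) from fun h => hj (h ▸ hi)), zero_mul]
      · rw [if_neg hk, mul_zero]
  · -- i in the final block
    have hrow : ∀ k : Fin l, blockDiagD l α β i k * blockDiagD l α β j k
        = (if i = k then 1 else 0) * blockDiagD l α β j k := by
      intro k
      simp only [blockDiagD, Matrix.of_apply, dif_neg hi]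
    rw [Finset.sum_congr rfl fun k _ => hrow k, Finset.sum_eq_single i]
    · rw [if_pos rfl, one_mul]
      by_cases hj : (j : ℕ) / 2 < l / 2
      · have hij : j ≠ i := fun h => hi (h ▸ hj)
        rw [Matrix.diagonal_apply_ne _ (Ne.symm hij)]
        simp only [blockDiagD, Matrix.of_apply, dif_pos hj]
        rw [if_neg (show ¬((j : ℕ) / 2 = (i : ℕ) / 2) from fun h => hi (h ▸ hj))]
      · simp only [blockDiagD, Matrix.of_apply, dif_neg hj]
        by_cases hij : i = j
        · subst hij
          rw [Matrix.diagonal_apply_eq, if_pos rfl, dif_neg hi]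
        · rw [Matrix.diagonal_apply_ne _ hij, if_neg (show ¬(j = i) from fun h => hij h.symm)]
    · intro k _ hk
      rw [if_neg (show ¬(i = k) from fun h => hk h.symm), zero_mul]
    · intro h; exact absurd (Finset.mem_univ i) h

/-- For an orthogonal matrix `A`, nonzero `λ_1, …, λ_l` and nonzero `α_i, β_i` with
`α_i² + β_i² ≠ 0`, set `Ā = diag(λ_1, …, λ_l) · blockdiag(D_1, …, D_{⌊l/2⌋}[, 1]) · A`
(with a final `1 × 1` block `1` when `l` is odd). Then the matrix-product code
`[C_1, …, C_l]Ā` is LCD if and only if all the codes `C_1, …, C_l` are LCD. -/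
theorem matrixProductCode_block_scaled_lcd_iff {F : Type*} [Field F] [Fintype F]
    {n l : ℕ}
    (C : Fin l → Submodule F (Fin n → F)) (A : Matrix (Fin l) (Fin l) F)
    (hA : A * A.transpose = 1)
    (lam : Fin l → F) (hlam : ∀ i, lam i ≠ 0)
    (α β : Fin (l / 2) → F) (hα : ∀ i, α i ≠ 0) (hβ : ∀ i, β i ≠ 0)
    (hαβ : ∀ i, α i ^ 2 + β i ^ 2 ≠ 0) :
    IsLCDMat (matrixProductCode C (Matrix.diagonal lam * blockDiagD l α β * A)) ↔
      ∀ i, IsLCD (C i) := by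
  classical
  set B := blockDiagD l α β with hB
  set e : Fin l → F := fun i =>
    if h : (i : ℕ) / 2 < l / 2 then α ⟨(i : ℕ) / 2, h⟩ ^ 2 + β ⟨(i : ℕ) / 2, h⟩ ^ 2 else 1
    with he
  have hBB : B * B.transpose = Matrix.diagonal e := blockDiagD_mul_transpose l α β
  have hMM : (Matrix.diagonal lam * B * A) * (Matrix.diagonal lam * B * A).transpose
      = Matrix.diagonal (lam * (e * lam)) := by
    rw [Matrix.transpose_mul, Matrix.transpose_mul, Matrix.diagonal_transpose]
    simp only [Matrix.mul_assoc]
    rw [← Matrix.mul_assoc A A.transpose, hA, Matrix.one_mul,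
      ← Matrix.mul_assoc B B.transpose, hBB,
      Matrix.diagonal_mul_diagonal, Matrix.diagonal_mul_diagonal]
    rfl
  have hd : ∀ a, (lam * (e * lam)) a ≠ 0 := by
    intro a
    have he' : e a ≠ 0 := by
      rw [he]
      dsimp only
      split
      · exact hαβ _
      · exact one_ne_zero
    exact mul_ne_zero (hlam a) (mul_ne_zero he' (hlam a))
  exact lcd_of_diag C _ _ hMM hd
end

section
/- Let E/F be an extension of finite fields of degree ℓ, and let B = {e_0, e_1, …, e_{ℓ−1}} be a self-dual basis of E over F, i.e., Tr_{E/F}(e_i e_j) = δ_{i,j} for all i, j. Let φ_B : E^n → F^{nℓ} be the F-linear map replacing each coordinate x = Σ_{i=0}^{ℓ−1} a_i e_i ∈ E by the ℓ-tuple (a_0, …, a_{ℓ−1}). Then a linear code C of length n over E is LCD (with respect to the Euclidean inner product over E) if and only if the linear code φ_B(C) of length nℓ over F is LCD (with respect to the Euclidean inner product over F). -/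
/-- Projection over a basis: `φ_B` replaces each coordinate `x = ∑ i, a_i e_i ∈ E`
of a vector in `E^n` by the `ℓ`-tuple `(a_0, …, a_{ℓ-1})` of its coordinates in the
basis `B = (e_0, …, e_{ℓ-1})` of `E` over `F`. -/
noncomputable def phiB {F E : Type*} [Field F] [Field E] [Algebra F E] {ℓ : ℕ}
    (b : Module.Basis (Fin ℓ) F E) {n : ℕ} : (Fin n → E) →ₗ[F] Matrix (Fin n) (Fin ℓ) F where
  toFun x := Matrix.of fun s i => b.repr (x s) i
  map_add' x y := by ext s i; simp
  map_smul' r x := by ext s i; simp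

/-! In a self-dual basis `Tr(u v)` is the dot product of the coordinate vectors of `u` and `v`;
in particular the coordinates of `t ∈ E` are the traces `Tr(e_j t)`. Summing over positions,
`⟨φ_B x, φ_B y⟩ = Tr ⟨x, y⟩`. Because `C` is closed under multiplication by `E`, the values
`Tr(e ⟨x, c⟩)` for all `e` are again such inner products, so `x ∈ C^⊥` iff `φ_B x ∈ φ_B(C)^⊥`.
As `φ_B` is injective, it maps `C ∩ C^⊥` onto `φ_B(C) ∩ φ_B(C)^⊥`. -/

section SelfDualBasis

variable {F E ι : Type*} [CommRing F] [CommRing E] [Algebra F E] [Fintype ι] [DecidableEq ι]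

theorem Module.Basis.trace_mul_eq_sum_repr_mul_repr (b : Module.Basis ι F E)
    (hb : ∀ i j, Algebra.trace F E (b i * b j) = if i = j then 1 else 0) (u v : E) :
    Algebra.trace F E (u * v) = ∑ i, b.repr u i * b.repr v i := by
  conv_lhs => rw [← b.sum_repr u, ← b.sum_repr v]
  simp only [Finset.sum_mul_sum, map_sum, smul_mul_smul_comm, map_smul, hb, smul_eq_mul,
    mul_ite, mul_one, mul_zero, Finset.sum_ite_eq, Finset.mem_univ, if_true]

theorem Module.Basis.repr_eq_trace_mul (b : Module.Basis ι F E)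
    (hb : ∀ i j, Algebra.trace F E (b i * b j) = if i = j then 1 else 0) (t : E) (j : ι) :
    b.repr t j = Algebra.trace F E (b j * t) := by
  simp [b.trace_mul_eq_sum_repr_mul_repr hb, Finsupp.single_apply]

end SelfDualBasis

section phiB

variable {F E : Type*} [Field F] [Field E] [Algebra F E] {ℓ n : ℕ}

theorem phiB_injective (b : Module.Basis (Fin ℓ) F E) :
    Function.Injective (phiB b : (Fin n → E) →ₗ[F] _) := by
  intro x y h
  funext s
  exact b.repr.injective <| Finsupp.ext fun i => (congr_fun₂ h s i :)

theorem sum_phiB_mul_phiB_eq_trace (b : Module.Basis (Fin ℓ) F E)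
    (hb : ∀ i j, Algebra.trace F E (b i * b j) = if i = j then 1 else 0) (x y : Fin n → E) :
    ∑ s, ∑ i, phiB b x s i * phiB b y s i = Algebra.trace F E (∑ s, x s * y s) := by
  rw [map_sum]
  exact Finset.sum_congr rfl fun s _ => (b.trace_mul_eq_sum_repr_mul_repr hb (x s) (y s)).symm

theorem mem_dualCode_iff_phiB_mem_dualMatCode (b : Module.Basis (Fin ℓ) F E)
    (hb : ∀ i j, Algebra.trace F E (b i * b j) = if i = j then 1 else 0)
    (C : Submodule E (Fin n → E)) (x : Fin n → E) :
    x ∈ dualCode C ↔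
      phiB b x ∈ dualMatCode (Submodule.map (phiB b) (C.restrictScalars F)) := by
  constructor
  · rintro hx _ ⟨c, hc, rfl⟩
    rw [sum_phiB_mul_phiB_eq_trace b hb, hx c hc, map_zero]
  · intro hx c hc
    have htrace (e : E) : Algebra.trace F E (e * ∑ s, x s * c s) = 0 := by
      have h := hx _ ⟨e • c, C.smul_mem e hc, rfl⟩
      rw [sum_phiB_mul_phiB_eq_trace b hb] at h
      simpa only [Finset.mul_sum, Pi.smul_apply, smul_eq_mul, mul_left_comm e] using h
    exact b.ext_elem fun j => by
      rw [b.repr_eq_trace_mul hb, htrace, map_zero, Finsupp.zero_apply]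

theorem map_phiB_inf_dualCode (b : Module.Basis (Fin ℓ) F E)
    (hb : ∀ i j, Algebra.trace F E (b i * b j) = if i = j then 1 else 0)
    (C : Submodule E (Fin n → E)) :
    Submodule.map (phiB b) ((C ⊓ dualCode C).restrictScalars F) =
      Submodule.map (phiB b) (C.restrictScalars F) ⊓
        dualMatCode (Submodule.map (phiB b) (C.restrictScalars F)) := by
  ext X
  simp only [Submodule.mem_map, Submodule.mem_inf, Submodule.restrictScalars_mem]
  constructor
  · rintro ⟨x, ⟨hxC, hxd⟩, rfl⟩
    exact ⟨⟨x, hxC, rfl⟩, (mem_dualCode_iff_phiB_mem_dualMatCode b hb C x).1 hxd⟩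
  · rintro ⟨⟨x, hxC, rfl⟩, hxd⟩
    exact ⟨x, ⟨hxC, (mem_dualCode_iff_phiB_mem_dualMatCode b hb C x).2 hxd⟩, rfl⟩

end phiB

theorem lcd_iff_lcd_of_selfDualBasis_general {F E : Type*} [Field F]
    [Field E] [Algebra F E] {ℓ n : ℕ}
    (b : Module.Basis (Fin ℓ) F E)
    (hb : ∀ i j, Algebra.trace F E (b i * b j) = if i = j then 1 else 0)
    (C : Submodule E (Fin n → E)) :
    IsLCD C ↔ IsLCDMat (Submodule.map (phiB b) (C.restrictScalars F)) := by
  rw [IsLCD, IsLCDMat, ← map_phiB_inf_dualCode b hb,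
    ← LinearMap.le_ker_iff_map, LinearMap.ker_eq_bot_of_injective (phiB_injective b), le_bot_iff,
    Submodule.restrictScalars_eq_bot_iff]

/-- Let `E/F` be an extension of finite fields of degree `ℓ` and `B` a self-dual basis
of `E` over `F` (i.e. `Tr_{E/F}(e_i e_j) = δ_{ij}`). A linear code `C` of length `n`
over `E` is LCD if and only if the linear code `φ_B(C)` of length `nℓ` over `F`
is LCD. -/
theorem lcd_iff_lcd_of_selfDualBasis {F E : Type*} [Field F] [Fintype F]
    [Field E] [Fintype E] [Algebra F E] {ℓ n : ℕ}
    (hdeg : Module.finrank F E = ℓ)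
    (b : Module.Basis (Fin ℓ) F E)
    (hb : ∀ i j, Algebra.trace F E (b i * b j) = if i = j then 1 else 0)
    (C : Submodule E (Fin n → E)) :
    IsLCD C ↔ IsLCDMat (Submodule.map (phiB b) (C.restrictScalars F)) :=
  lcd_iff_lcd_of_selfDualBasis_general b hb C
end
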